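/- Let F be a class of functions from Z to {0,1} with Littlestone dimension d. Then for every Z-valued complete binary tree Z̄ of depth T, the size of the smallest 0-cover of F on Z̄ is at most (eT)^d. -/

import Mathlib

/-!
Split `F` by the value `b` of its functions at the root label `z`. The restriction
`F_b = {f ∈ F | f z = b}` is covered on each child subtree recursively, and the two child covers
merge into a cover on the whole tree of size the maximum, not the sum, since a boolean tree may
follow a different cover member on each side. If both `F_false` and `F_true` shattered trees of
depth `d`, then `F` would shatter the depth-`d + 1` tree rooted at `z`; so one of the two has
smaller dimension, and Pascal's rule yields the Sauer–Shelah bound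
`∑_{i ≤ d} C(T, i) ≤ (T + 1)^d ≤ (e T)^d`.
-/

/-- A complete binary tree of depth `d` with nodes labeled by `Z`; equivalently, a
`Z`-valued tree assigning `z^{(t)}(ε) ∈ Z` to each level `t` and sign-prefix `ε`. -/
abbrev BTree (Z : Type*) (d : ℕ) := ∀ t : Fin d, (Fin t → Bool) → Z

def LShattered {Z : Type*} (F : Set (Z → Bool)) (d : ℕ) (tr : BTree Z d) : Prop :=
  ∀ ε : Fin d → Bool, ∃ f ∈ F, ∀ t : Fin d,
    f (tr t fun i => ε ⟨i.1, i.isLt.trans t.isLt⟩) = ε t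

noncomputable def Ldim {Z : Type*} (F : Set (Z → Bool)) : ℕ∞ :=
  sSup ((fun n : ℕ => (n : ℕ∞)) '' {n | ∃ tr : BTree Z n, LShattered F n tr})

open Finset

theorem exists_selectors_card_le_sup {ι α : Type*} [Fintype ι] [Inhabited α]
    (A : ι → Finset α) :
    ∃ P : Finset (ι → α), (∀ i, ∀ a ∈ A i, ∃ p ∈ P, p i = a) ∧ #P ≤ univ.sup fun i => #(A i) := by
  classical
  refine ⟨(range (univ.sup fun i => #(A i))).image fun k i => (A i).toList.getD k default,
    ?_, card_image_le.trans (card_range _).le⟩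
  intro i a ha
  have hk : (A i).toList.idxOf a < (A i).toList.length :=
    List.idxOf_lt_length_iff.2 (mem_toList.2 ha)
  refine ⟨_, mem_image_of_mem _ ((mem_range (m := (A i).toList.idxOf a)).2 ?_), ?_⟩
  · exact (length_toList (A i) ▸ hk).trans_le (le_sup (f := fun i => #(A i)) (mem_univ i))
  · simp only [List.getD_eq_getElem _ _ hk, List.getElem_idxOf]

theorem sum_range_choose_succ (T d : ℕ) :
    ∑ i ∈ range (d + 1), (T + 1).choose i =
      ∑ i ∈ range (d + 1), T.choose i + ∑ i ∈ range d, T.choose i := by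
  induction d with
  | zero => simp
  | succ d ih =>
    rw [sum_range_succ, ih, Nat.choose_succ_succ, sum_range_succ _ (d + 1), sum_range_succ _ d]
    ring

theorem sum_range_succ_choose_le_pow (T d : ℕ) :
    ∑ i ∈ range (d + 1), T.choose i ≤ (T + 1) ^ d := by
  rw [add_pow]
  refine sum_le_sum fun i hi => ?_
  rw [one_pow, mul_one]
  exact (Nat.choose_le_pow T i).trans
    (Nat.le_mul_of_pos_right _ (Nat.choose_pos (mem_range_succ_iff.1 hi)))

theorem natCast_add_one_le_exp_one_mul {T : ℕ} (hT : 1 ≤ T) : (T : ℝ) + 1 ≤ Real.exp 1 * T := by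
  have hT' : (1 : ℝ) ≤ T := by exact_mod_cast hT
  nlinarith [Real.add_one_le_exp 1]

namespace BTree

variable {Z : Type*} {T : ℕ}

def path (tr : BTree Z T) (ε : Fin T → Bool) : Fin T → Z :=
  fun t => tr t fun i => ε ⟨i, i.isLt.trans t.isLt⟩

def node (z : Z) (ch : Bool → BTree Z T) : BTree Z (T + 1)
  | ⟨0, _⟩, _ => z
  | ⟨k + 1, h⟩, ε => ch (ε 0) ⟨k, Nat.lt_of_succ_lt_succ h⟩ (Fin.tail ε)

theorem path_node (z : Z) (ch : Bool → BTree Z T) (ε : Fin (T + 1) → Bool) :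
    (node z ch).path ε = Fin.cons z ((ch (ε 0)).path (Fin.tail ε)) := by
  funext t
  cases t using Fin.cases <;> rfl

theorem exists_eq_node (tr : BTree Z (T + 1)) : ∃ z ch, tr = node z ch := by
  refine ⟨tr 0 Fin.elim0, fun b s η => tr s.succ (Fin.cons b η), ?_⟩
  funext t ε
  rcases t with ⟨_ | k, h⟩
  · exact congrArg _ (Subsingleton.elim _ _)
  · exact congrArg _ (Fin.cons_self_tail ε).symm

end BTree

open BTree

section ZeroCover

variable {Z : Type*} {F : Set (Z → Bool)} {T d : ℕ}

theorem lShattered_iff {tr : BTree Z d} :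
    LShattered F d tr ↔ ∀ ε, ∃ f ∈ F, f ∘ tr.path ε = ε := by
  simp only [LShattered, funext_iff]
  rfl

theorem LShattered.mono {G : Set (Z → Bool)} (hFG : F ⊆ G) {tr : BTree Z d}
    (h : LShattered F d tr) : LShattered G d tr :=
  fun ε => (h ε).imp fun _ ⟨hf, hε⟩ => ⟨hFG hf, hε⟩

theorem lShattered_node {z : Z} {ch : Bool → BTree Z d}
    (h : ∀ b, LShattered {f ∈ F | f z = b} d (ch b)) : LShattered F (d + 1) (node z ch) := by
  simp only [lShattered_iff] at h ⊢
  intro ε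
  obtain ⟨f, ⟨hf, hfz⟩, hε⟩ := h (ε 0) (Fin.tail ε)
  refine ⟨f, hf, ?_⟩
  rw [path_node, Fin.comp_cons, hfz, hε, Fin.cons_self_tail]

theorem exists_forall_not_lShattered_restrict
    (hF : ∀ tr : BTree Z (d + 1), ¬ LShattered F (d + 1) tr) (z : Z) :
    ∃ b, ∀ tr : BTree Z d, ¬ LShattered {f ∈ F | f z = b} d tr := by
  by_contra! h
  choose ch hch using h
  exact hF _ (lShattered_node hch)

theorem not_lShattered_of_ldim_lt (hd : Ldim F < d) (tr : BTree Z d) : ¬ LShattered F d tr :=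
  fun h => (le_sSup ⟨d, ⟨tr, h⟩, rfl⟩ : (d : ℕ∞) ≤ Ldim F).not_gt hd

def IsZeroCover (F : Set (Z → Bool)) (tree : BTree Z T) (V : Finset (BTree Bool T)) : Prop :=
  ∀ f ∈ F, ∀ ε, ∃ v ∈ V, v.path ε = f ∘ tree.path ε

theorem isZeroCover_of_forall_not_lShattered_zero (hF : ∀ tr : BTree Z 0, ¬ LShattered F 0 tr)
    (tree : BTree Z T) (V : Finset (BTree Bool T)) : IsZeroCover F tree V :=
  fun f hf => (hF (fun t => t.elim0) fun _ => ⟨f, hf, fun t => t.elim0⟩).elim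

theorem IsZeroCover.union_of_restrict {tree : BTree Z T} {V W : Finset (BTree Bool T)}
    {z : Z} {b : Bool} (hV : IsZeroCover {f ∈ F | f z = b} tree V)
    (hW : IsZeroCover {f ∈ F | f z = !b} tree W) : IsZeroCover F tree (V ∪ W) := by
  intro f hf ε
  by_cases hfz : f z = b
  · obtain ⟨v, hv, h⟩ := hV f ⟨hf, hfz⟩ ε
    exact ⟨v, mem_union_left _ hv, h⟩
  · obtain ⟨v, hv, h⟩ := hW f ⟨hf, Bool.eq_not_iff.2 hfz⟩ ε
    exact ⟨v, mem_union_right _ hv, h⟩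

theorem exists_isZeroCover_node {z : Z} {c : Bool} (hF : ∀ f ∈ F, f z = c)
    {ch : Bool → BTree Z T} {n : ℕ} (h : ∀ b, ∃ V, IsZeroCover F (ch b) V ∧ #V ≤ n) :
    ∃ W, IsZeroCover F (node z ch) W ∧ #W ≤ n := by
  choose V hV hVn using h
  obtain ⟨P, hP, hPcard⟩ := exists_selectors_card_le_sup V
  refine ⟨P.image (node c), ?_,
    card_image_le.trans (hPcard.trans (Finset.sup_le fun b _ => hVn b))⟩
  intro f hf ε
  obtain ⟨v, hv, hpath⟩ := hV (ε 0) f hf (Fin.tail ε)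
  obtain ⟨p, hp, rfl⟩ := hP _ v hv
  refine ⟨node c p, mem_image_of_mem _ hp, ?_⟩
  rw [path_node, path_node, hpath, Fin.comp_cons, hF f hf]

theorem exists_isZeroCover_card_le_sum_choose (T : ℕ) :
    ∀ (F : Set (Z → Bool)) (d : ℕ) (tree : BTree Z T), (∀ tr : BTree Z d, ¬ LShattered F d tr) →
      ∃ V, IsZeroCover F tree V ∧ #V ≤ ∑ i ∈ range d, T.choose i := by
  induction T with
  | zero =>
    rintro F (_ | d) tree hF
    · exact ⟨∅, isZeroCover_of_forall_not_lShattered_zero hF tree ∅, by simp⟩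
    · exact ⟨{default}, fun f _ ε => ⟨default, mem_singleton_self _, Subsingleton.elim _ _⟩,
        by simp [sum_range_succ']⟩
  | succ T ih =>
    rintro F (_ | d) tree hF
    · exact ⟨∅, isZeroCover_of_forall_not_lShattered_zero hF tree ∅, by simp⟩
    obtain ⟨z, ch, rfl⟩ := exists_eq_node tree
    have cover_restrict (b : Bool) (e : ℕ)
        (hb : ∀ tr : BTree Z e, ¬ LShattered {f ∈ F | f z = b} e tr) :
        ∃ V, IsZeroCover {f ∈ F | f z = b} (node z ch) V ∧ #V ≤ ∑ i ∈ range e, T.choose i :=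
      exists_isZeroCover_node (fun _ hf => hf.2) fun b' => ih _ e (ch b') hb
    obtain ⟨b, hb⟩ := exists_forall_not_lShattered_restrict hF z
    obtain ⟨V, hV, hVcard⟩ := cover_restrict b d hb
    obtain ⟨W, hW, hWcard⟩ := cover_restrict (!b) (d + 1) fun tr h =>
      hF tr (h.mono (Set.sep_subset _ _))
    refine ⟨V ∪ W, hV.union_of_restrict hW, ?_⟩
    calc #(V ∪ W) ≤ #V + #W := card_union_le V W
      _ ≤ ∑ i ∈ range d, T.choose i + ∑ i ∈ range (d + 1), T.choose i := add_le_add hVcard hWcard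
      _ = ∑ i ∈ range (d + 1), (T + 1).choose i := by rw [sum_range_choose_succ, add_comm]

end ZeroCover

/-- 0-cover bound: on any `Z`-valued tree of depth `T`, the class `F` admits a 0-cover
by at most `(eT)^d` boolean trees, where `d = Ldim F`. -/
theorem zero_cover_bound {Z : Type*} (F : Set (Z → Bool)) (d : ℕ)
    (hd : Ldim F = (d : ℕ∞)) (T : ℕ) (hT : 1 ≤ T) (tree : BTree Z T) :
    ∃ V : Finset (BTree Bool T),
      (∀ f ∈ F, ∀ ε : Fin T → Bool, ∃ v ∈ V, ∀ t : Fin T,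
        v t (fun i => ε ⟨i.1, i.isLt.trans t.isLt⟩) =
          f (tree t (fun i => ε ⟨i.1, i.isLt.trans t.isLt⟩))) ∧
      (V.card : ℝ) ≤ (Real.exp 1 * T) ^ d := by
  have hF : ∀ tr : BTree Z (d + 1), ¬ LShattered F (d + 1) tr :=
    not_lShattered_of_ldim_lt (by rw [hd]; exact_mod_cast d.lt_succ_self)
  obtain ⟨V, hV, hVcard⟩ := exists_isZeroCover_card_le_sum_choose T F (d + 1) tree hF
  refine ⟨V, fun f hf ε => (hV f hf ε).imp fun _ ⟨hv, h⟩ => ⟨hv, congrFun h⟩, ?_⟩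
  calc (#V : ℝ) ≤ ((T + 1 : ℕ) : ℝ) ^ d := by
        exact_mod_cast hVcard.trans (sum_range_succ_choose_le_pow T d)
    _ ≤ (Real.exp 1 * T) ^ d := by
        push_cast
        exact pow_le_pow_left₀ (by positivity) (natCast_add_one_le_exp_one_mul hT) d
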